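/- In ℚ[j1,j2,j3,p1,p2,p3,k1,k2,k3,h], with I₁ = h, I₂ = p·p, I₃ = k·k, I₄ = j·j, I₅ = k·p, I₆ = j·k, I₇ = j·p, M = j·(p×k), the coefficients of the characteristic polynomial of the anti-de Sitter matrix D (rows (0,j3,j2,-k1,p1), (-j3,0,j1,k2,-p2), (-j2,-j1,0,-k3,p3), (-k1,k2,-k3,0,h), (p1,-p2,p3,-h,0)) satisfy: the coefficient of T³ in det(D - T·Id₅) equals I₁² - I₂ - I₃ + I₄ and the coefficient of T equals I₁²I₄ + I₂I₃ - I₅² - I₆² - I₇² - 2I₁M. -/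

import Mathlib

open Matrix Polynomial

noncomputable def j1 : MvPolynomial (Fin 10) ℚ := MvPolynomial.X 0
noncomputable def j2 : MvPolynomial (Fin 10) ℚ := MvPolynomial.X 1
noncomputable def j3 : MvPolynomial (Fin 10) ℚ := MvPolynomial.X 2
noncomputable def p1 : MvPolynomial (Fin 10) ℚ := MvPolynomial.X 3
noncomputable def p2 : MvPolynomial (Fin 10) ℚ := MvPolynomial.X 4
noncomputable def p3 : MvPolynomial (Fin 10) ℚ := MvPolynomial.X 5
noncomputable def k1 : MvPolynomial (Fin 10) ℚ := MvPolynomial.X 6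
noncomputable def k2 : MvPolynomial (Fin 10) ℚ := MvPolynomial.X 7
noncomputable def k3 : MvPolynomial (Fin 10) ℚ := MvPolynomial.X 8
noncomputable def h : MvPolynomial (Fin 10) ℚ := MvPolynomial.X 9

noncomputable def D : Matrix (Fin 5) (Fin 5) (MvPolynomial (Fin 10) ℚ) :=
  !![0, j3, j2, -k1, p1;
    -j3, 0, j1, k2, -p2;
    -j2, -j1, 0, -k3, p3;
    -k1, k2, -k3, 0, h;
    p1, -p2, p3, -h, 0]

lemma det_fin_five' {R : Type*} [CommRing R]
    (a₀ a₁ a₂ a₃ a₄ b₀ b₁ b₂ b₃ b₄ c₀ c₁ c₂ c₃ c₄ d₀ d₁ d₂ d₃ d₄ e₀ e₁ e₂ e₃ e₄ : R) :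
    Matrix.det !![a₀,a₁,a₂,a₃,a₄; b₀,b₁,b₂,b₃,b₄; c₀,c₁,c₂,c₃,c₄; d₀,d₁,d₂,d₃,d₄; e₀,e₁,e₂,e₃,e₄] =
      a₀ * Matrix.det !![b₁,b₂,b₃,b₄; c₁,c₂,c₃,c₄; d₁,d₂,d₃,d₄; e₁,e₂,e₃,e₄]
      - a₁ * Matrix.det !![b₀,b₂,b₃,b₄; c₀,c₂,c₃,c₄; d₀,d₂,d₃,d₄; e₀,e₂,e₃,e₄]
      + a₂ * Matrix.det !![b₀,b₁,b₃,b₄; c₀,c₁,c₃,c₄; d₀,d₁,d₃,d₄; e₀,e₁,e₃,e₄]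
      - a₃ * Matrix.det !![b₀,b₁,b₂,b₄; c₀,c₁,c₂,c₄; d₀,d₁,d₂,d₄; e₀,e₁,e₂,e₄]
      + a₄ * Matrix.det !![b₀,b₁,b₂,b₃; c₀,c₁,c₂,c₃; d₀,d₁,d₂,d₃; e₀,e₁,e₂,e₃] := by
  have h0 : (!![a₀,a₁,a₂,a₃,a₄; b₀,b₁,b₂,b₃,b₄; c₀,c₁,c₂,c₃,c₄; d₀,d₁,d₂,d₃,d₄; e₀,e₁,e₂,e₃,e₄]).submatrix Fin.succ (Fin.succAbove 0) = !![b₁,b₂,b₃,b₄; c₁,c₂,c₃,c₄; d₁,d₂,d₃,d₄; e₁,e₂,e₃,e₄] := by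
    ext i j; fin_cases i <;> fin_cases j <;> rfl
  have h1 : (!![a₀,a₁,a₂,a₃,a₄; b₀,b₁,b₂,b₃,b₄; c₀,c₁,c₂,c₃,c₄; d₀,d₁,d₂,d₃,d₄; e₀,e₁,e₂,e₃,e₄]).submatrix Fin.succ (Fin.succAbove (Fin.succ 0)) = !![b₀,b₂,b₃,b₄; c₀,c₂,c₃,c₄; d₀,d₂,d₃,d₄; e₀,e₂,e₃,e₄] := by
    ext i j; fin_cases i <;> fin_cases j <;> rfl
  have h2 : (!![a₀,a₁,a₂,a₃,a₄; b₀,b₁,b₂,b₃,b₄; c₀,c₁,c₂,c₃,c₄; d₀,d₁,d₂,d₃,d₄; e₀,e₁,e₂,e₃,e₄]).submatrix Fin.succ (Fin.succAbove (Fin.succ (Fin.succ 0))) = !![b₀,b₁,b₃,b₄; c₀,c₁,c₃,c₄; d₀,d₁,d₃,d₄; e₀,e₁,e₃,e₄] := by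
    ext i j; fin_cases i <;> fin_cases j <;> rfl
  have h3 : (!![a₀,a₁,a₂,a₃,a₄; b₀,b₁,b₂,b₃,b₄; c₀,c₁,c₂,c₃,c₄; d₀,d₁,d₂,d₃,d₄; e₀,e₁,e₂,e₃,e₄]).submatrix Fin.succ (Fin.succAbove (Fin.succ (Fin.succ (Fin.succ 0)))) = !![b₀,b₁,b₂,b₄; c₀,c₁,c₂,c₄; d₀,d₁,d₂,d₄; e₀,e₁,e₂,e₄] := by
    ext i j; fin_cases i <;> fin_cases j <;> rfl
  have h4 : (!![a₀,a₁,a₂,a₃,a₄; b₀,b₁,b₂,b₃,b₄; c₀,c₁,c₂,c₃,c₄; d₀,d₁,d₂,d₃,d₄; e₀,e₁,e₂,e₃,e₄]).submatrix Fin.succ (Fin.succAbove (Fin.succ (Fin.succ (Fin.succ (Fin.succ 0))))) = !![b₀,b₁,b₂,b₃; c₀,c₁,c₂,c₃; d₀,d₁,d₂,d₃; e₀,e₁,e₂,e₃] := by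
    ext i j; fin_cases i <;> fin_cases j <;> rfl
  rw [Matrix.det_succ_row_zero, Fin.sum_univ_succ, Fin.sum_univ_succ, Fin.sum_univ_succ,
    Fin.sum_univ_succ, Fin.sum_univ_succ, Fin.sum_univ_zero, h0, h1, h2, h3, h4]
  norm_num [Fin.val_succ, Matrix.cons_val_two, Matrix.vecHead, Matrix.vecTail]
  ring

lemma det_fin_four' {R : Type*} [CommRing R]
    (a₀ a₁ a₂ a₃ b₀ b₁ b₂ b₃ c₀ c₁ c₂ c₃ d₀ d₁ d₂ d₃ : R) :
    Matrix.det !![a₀,a₁,a₂,a₃; b₀,b₁,b₂,b₃; c₀,c₁,c₂,c₃; d₀,d₁,d₂,d₃] =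
      a₀ * Matrix.det !![b₁,b₂,b₃; c₁,c₂,c₃; d₁,d₂,d₃]
      - a₁ * Matrix.det !![b₀,b₂,b₃; c₀,c₂,c₃; d₀,d₂,d₃]
      + a₂ * Matrix.det !![b₀,b₁,b₃; c₀,c₁,c₃; d₀,d₁,d₃]
      - a₃ * Matrix.det !![b₀,b₁,b₂; c₀,c₁,c₂; d₀,d₁,d₂] := by
  have h0 : (!![a₀,a₁,a₂,a₃; b₀,b₁,b₂,b₃; c₀,c₁,c₂,c₃; d₀,d₁,d₂,d₃]).submatrix Fin.succ (Fin.succAbove 0) = !![b₁,b₂,b₃; c₁,c₂,c₃; d₁,d₂,d₃] := by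
    ext i j; fin_cases i <;> fin_cases j <;> rfl
  have h1 : (!![a₀,a₁,a₂,a₃; b₀,b₁,b₂,b₃; c₀,c₁,c₂,c₃; d₀,d₁,d₂,d₃]).submatrix Fin.succ (Fin.succAbove (Fin.succ 0)) = !![b₀,b₂,b₃; c₀,c₂,c₃; d₀,d₂,d₃] := by
    ext i j; fin_cases i <;> fin_cases j <;> rfl
  have h2 : (!![a₀,a₁,a₂,a₃; b₀,b₁,b₂,b₃; c₀,c₁,c₂,c₃; d₀,d₁,d₂,d₃]).submatrix Fin.succ (Fin.succAbove (Fin.succ (Fin.succ 0))) = !![b₀,b₁,b₃; c₀,c₁,c₃; d₀,d₁,d₃] := by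
    ext i j; fin_cases i <;> fin_cases j <;> rfl
  have h3 : (!![a₀,a₁,a₂,a₃; b₀,b₁,b₂,b₃; c₀,c₁,c₂,c₃; d₀,d₁,d₂,d₃]).submatrix Fin.succ (Fin.succAbove (Fin.succ (Fin.succ (Fin.succ 0)))) = !![b₀,b₁,b₂; c₀,c₁,c₂; d₀,d₁,d₂] := by
    ext i j; fin_cases i <;> fin_cases j <;> rfl
  rw [Matrix.det_succ_row_zero, Fin.sum_univ_succ, Fin.sum_univ_succ, Fin.sum_univ_succ,
    Fin.sum_univ_succ, Fin.sum_univ_zero, h0, h1, h2, h3]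
  norm_num [Fin.val_succ, Matrix.cons_val_two, Matrix.vecHead, Matrix.vecTail]
  ring

lemma m_eq : (Polynomial.X : Polynomial (MvPolynomial (Fin 10) ℚ)) • (1 : Matrix (Fin 5) (Fin 5) (Polynomial (MvPolynomial (Fin 10) ℚ))) - (D.map Polynomial.C) =
  !![X, -C j3, -C j2, C k1, -C p1;
     C j3, X, -C j1, -C k2, C p2;
     C j2, C j1, X, C k3, -C p3;
     C k1, -C k2, C k3, X, -C h;
     -C p1, C p2, -C p3, C h, X] := by
  ext i j
  fin_cases i <;> fin_cases j <;>
    simp [D, Matrix.one_apply]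

noncomputable def A3 : MvPolynomial (Fin 10) ℚ :=
  h^2 - (p1^2 + p2^2 + p3^2) - (k1^2 + k2^2 + k3^2) + (j1^2 + j2^2 + j3^2)
noncomputable def A1 : MvPolynomial (Fin 10) ℚ :=
  h^2*(j1^2 + j2^2 + j3^2) + (p1^2 + p2^2 + p3^2)*(k1^2 + k2^2 + k3^2) - (p1*k1 + p2*k2 + p3*k3)^2 - (j1*k1 + j2*k2 + j3*k3)^2 - (j1*p1 + j2*p2 + j3*p3)^2 - 2*h*(j1*(p2*k3 - p3*k2) + j2*(p3*k1 - p1*k3) + j3*(p1*k2 - p2*k1))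


lemma det_fin_three' {R : Type*} [CommRing R] (a₀ a₁ a₂ b₀ b₁ b₂ c₀ c₁ c₂ : R) :
    Matrix.det !![a₀,a₁,a₂; b₀,b₁,b₂; c₀,c₁,c₂] =
      a₀*b₁*c₂ - a₀*b₂*c₁ - a₁*b₀*c₂ + a₁*b₂*c₀ + a₂*b₀*c₁ - a₂*b₁*c₀ := by
  rw [Matrix.det_fin_three]
  norm_num [Matrix.cons_val_two, Matrix.vecHead, Matrix.vecTail]

set_option maxHeartbeats 4000000 in
lemma det_eq : Matrix.det ((Polynomial.X : Polynomial (MvPolynomial (Fin 10) ℚ)) • (1 : Matrix (Fin 5) (Fin 5) (Polynomial (MvPolynomial (Fin 10) ℚ))) - (D.map Polynomial.C)) = X^5 + C A3 * X^3 + C A1 * X := by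
  rw [m_eq, det_fin_five']
  simp only [det_fin_four', det_fin_three']
  rw [show (X^5 + C A3 * X^3 + C A1 * X : Polynomial (MvPolynomial (Fin 10) ℚ)) =
    X^5 + (C h^2 - (C p1^2 + C p2^2 + C p3^2) - (C k1^2 + C k2^2 + C k3^2) + (C j1^2 + C j2^2 + C j3^2)) * X^3 +
    (C h^2*(C j1^2 + C j2^2 + C j3^2) + (C p1^2 + C p2^2 + C p3^2)*(C k1^2 + C k2^2 + C k3^2) - (C p1*C k1 + C p2*C k2 + C p3*C k3)^2 - (C j1*C k1 + C j2*C k2 + C j3*C k3)^2 - (C j1*C p1 + C j2*C p2 + C j3*C p3)^2 - 2*C h*(C j1*(C p2*C k3 - C p3*C k2) + C j2*(C p3*C k1 - C p1*C k3) + C j3*(C p1*C k2 - C p2*C k1))) * X by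
      simp only [A3, A1, _root_.map_add, _root_.map_sub, _root_.map_mul, _root_.map_pow, map_ofNat]]
  ring


theorem main :
    (Matrix.det ((Polynomial.X : Polynomial (MvPolynomial (Fin 10) ℚ)) • (1 : Matrix (Fin 5) (Fin 5) (Polynomial (MvPolynomial (Fin 10) ℚ))) - (D.map Polynomial.C))).coeff 3 =
      h^2 - (p1^2 + p2^2 + p3^2) - (k1^2 + k2^2 + k3^2) + (j1^2 + j2^2 + j3^2) ∧
    (Matrix.det ((Polynomial.X : Polynomial (MvPolynomial (Fin 10) ℚ)) • (1 : Matrix (Fin 5) (Fin 5) (Polynomial (MvPolynomial (Fin 10) ℚ))) - (D.map Polynomial.C))).coeff 1 =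
      h^2*(j1^2 + j2^2 + j3^2) + (p1^2 + p2^2 + p3^2)*(k1^2 + k2^2 + k3^2) - (p1*k1 + p2*k2 + p3*k3)^2 - (j1*k1 + j2*k2 + j3*k3)^2 - (j1*p1 + j2*p2 + j3*p3)^2 - 2*h*(j1*(p2*k3 - p3*k2) + j2*(p3*k1 - p1*k3) + j3*(p1*k2 - p2*k1)) := by
  rw [det_eq]
  constructor
  · show _ = A3
    simp [Polynomial.coeff_X_pow]
  · show _ = A1
    simp [Polynomial.coeff_X_pow]
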